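/- For every real μ, every real σ > 0, and every real η⁻, the integral ∫_{-∞}^{∞} x · (1/(σ√(2π))) · exp(−(x − μ)²/(2σ²)) · ( η⁻ + 2(1 − η⁻) · Φ((x − μ)/σ) ) dx equals μ + σ · (1 − η⁻)/√π, where Φ denotes the standard normal cumulative distribution function Φ(t) = ∫_{-∞}^{t} (1/√(2π)) exp(−y²/2) dy. (In the paper's terminology: the effective average fitness after linear ranking selection applied to a Gaussian fitness distribution with mean μ and variance σ² is M* = σ·S_R(η⁻) + μ, with S_R(η⁻) = (1 − η⁻)/√π.) -/

import Mathlib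

/-!
Substituting `x = μ + σ t` reduces the claim to the standard normal density `φ` and its
distribution function `Φ`. The reweighted density `φ (η + 2 (1 - η) Φ)` is again a probability
density, since `Φ ^ 2 / 2` is a primitive of `φ Φ` and so `∫ φ Φ = 1 / 2`. Its mean is
`2 (1 - η) ∫ t φ Φ`, and as `φ' t = -t φ t`, integration by parts gives
`∫ t φ Φ = ∫ φ ^ 2 = 1 / (2 √π)`.
-/

open Real MeasureTheory

noncomputable def stdNormalCdf (t : ℝ) : ℝ :=
  ∫ y in Set.Iic t, (1 / Real.sqrt (2 * Real.pi)) * Real.exp (-y ^ 2 / 2)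

open Filter Set Topology ProbabilityTheory

section IntegralIic

variable {E : Type*} [NormedAddCommGroup E] [NormedSpace ℝ E] {f : ℝ → E}

theorem hasDerivAt_integral_Iic [CompleteSpace E] (hf : Continuous f) (hfi : Integrable f)
    (t : ℝ) : HasDerivAt (fun s ↦ ∫ y in Iic s, f y) (f t) t := by
  have hF : (fun s ↦ ∫ y in Iic s, f y)
      = fun s ↦ (∫ y in Iic 0, f y) + ∫ y in (0 : ℝ)..s, f y :=
    funext fun s ↦ by
      rw [← intervalIntegral.integral_Iic_sub_Iic hfi.integrableOn hfi.integrableOn,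
        add_sub_cancel]
  rw [hF]
  exact (intervalIntegral.integral_hasDerivAt_right hfi.intervalIntegrable
    hf.stronglyMeasurable.stronglyMeasurableAtFilter hf.continuousAt).const_add _

theorem tendsto_integral_Iic_atTop (hfi : Integrable f) :
    Tendsto (fun t ↦ ∫ y in Iic t, f y) atTop (𝓝 (∫ y, f y)) :=
  (aecover_Iic tendsto_id).integral_tendsto_of_countably_generated hfi

theorem tendsto_integral_Iic_atBot (hfi : Integrable f) :
    Tendsto (fun t ↦ ∫ y in Iic t, f y) atBot (𝓝 0) := by
  have hIoi : Tendsto (fun t ↦ ∫ y in Ioi t, f y) atBot (𝓝 (∫ y, f y)) :=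
    (aecover_Ioi tendsto_id).integral_tendsto_of_countably_generated hfi
  have hsplit (t : ℝ) : ∫ y in Iic t, f y = (∫ y, f y) - ∫ y in Ioi t, f y := by
    rw [← intervalIntegral.integral_Iic_add_Ioi hfi.integrableOn hfi.integrableOn,
      add_sub_cancel_right]
  simpa only [hsplit, sub_self] using (tendsto_const_nhds (x := ∫ y, f y)).sub hIoi

theorem norm_integral_Iic_le (hfi : Integrable f) (t : ℝ) :
    ‖∫ y in Iic t, f y‖ ≤ ∫ y, ‖f y‖ :=
  (norm_integral_le_integral_norm _).trans
    (setIntegral_le_integral hfi.norm (Eventually.of_forall fun _ ↦ norm_nonneg _))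

end IntegralIic

theorem integral_mul_integral_Iic {f : ℝ → ℝ} (hf : Continuous f) (hfi : Integrable f) :
    ∫ t, f t * ∫ y in Iic t, f y = (∫ y, f y) ^ 2 / 2 := by
  have hderiv (t : ℝ) : HasDerivAt (fun s ↦ (∫ y in Iic s, f y) ^ 2 / 2)
      (f t * ∫ y in Iic t, f y) t := by
    refine (((hasDerivAt_integral_Iic hf hfi t).fun_pow 2).div_const 2).congr_deriv ?_
    norm_num
    ring
  have hcont : Continuous fun t ↦ ∫ y in Iic t, f y :=
    continuous_iff_continuousAt.2 fun t ↦ (hasDerivAt_integral_Iic hf hfi t).continuousAt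
  have hint : Integrable (fun t ↦ f t * ∫ y in Iic t, f y) :=
    hfi.mul_bdd hcont.aestronglyMeasurable (Eventually.of_forall (norm_integral_Iic_le hfi))
  have hbot := ((tendsto_integral_Iic_atBot hfi).pow 2).div_const 2
  have htop := ((tendsto_integral_Iic_atTop hfi).pow 2).div_const 2
  rw [integral_of_hasDerivAt_of_tendsto hderiv hint (by simpa using hbot) htop]
  ring

local notation "φ" => gaussianPDFReal 0 1

theorem gaussianPDFReal_zero_one_apply (t : ℝ) :
    φ t = 1 / √(2 * π) * exp (-t ^ 2 / 2) := by
  simp [gaussianPDFReal]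

theorem continuous_gaussianPDFReal (μ : ℝ) (v : NNReal) : Continuous (gaussianPDFReal μ v) := by
  unfold gaussianPDFReal
  fun_prop

theorem hasDerivAt_gaussianPDFReal (μ : ℝ) (v : NNReal) (x : ℝ) :
    HasDerivAt (gaussianPDFReal μ v) (-(x - μ) / v * gaussianPDFReal μ v x) x := by
  have hexp : HasDerivAt (fun y ↦ -(y - μ) ^ 2 / (2 * v)) (-(x - μ) / v) x := by
    refine ((((hasDerivAt_id' x).sub_const μ).fun_pow 2).neg.div_const _).congr_deriv ?_
    field_simp
    ring
  exact (hexp.exp.const_mul (√(2 * π * v))⁻¹).congr_deriv (by unfold gaussianPDFReal; ring)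

theorem integral_mul_gaussianPDFReal (μ : ℝ) {v : NNReal} (hv : v ≠ 0) :
    ∫ x, x * gaussianPDFReal μ v x = μ := by
  simpa [integral_gaussianReal_eq_integral_smul hv, mul_comm] using
    integral_id_gaussianReal (μ := μ) (v := v)

theorem integrable_mul_gaussianPDFReal_zero_one : Integrable fun x ↦ x * φ x := by
  refine ((integrable_mul_exp_neg_mul_sq (by norm_num : (0 : ℝ) < 1 / 2)).const_mul
    (1 / √(2 * π))).congr (Eventually.of_forall fun x ↦ ?_)
  simp only [gaussianPDFReal_zero_one_apply]
  ring_nf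

theorem gaussianPDFReal_zero_one_sq (x : ℝ) : φ x ^ 2 = (2 * π)⁻¹ * exp (-1 * x ^ 2) := by
  rw [gaussianPDFReal_zero_one_apply, mul_pow, ← exp_nat_mul, div_pow, sq_sqrt (by positivity)]
  ring_nf

theorem integrable_gaussianPDFReal_zero_one_sq : Integrable fun x ↦ φ x ^ 2 := by
  simp_rw [gaussianPDFReal_zero_one_sq]
  exact (integrable_exp_neg_mul_sq one_pos).const_mul _

theorem integral_gaussianPDFReal_zero_one_sq : ∫ x, φ x ^ 2 = 1 / (2 * √π) := by
  simp_rw [gaussianPDFReal_zero_one_sq]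
  rw [integral_const_mul, integral_gaussian, div_one]
  field_simp
  exact sq_sqrt pi_pos.le

theorem stdNormalCdf_eq_integral_gaussianPDFReal (t : ℝ) :
    stdNormalCdf t = ∫ y in Iic t, φ y := by
  simp only [stdNormalCdf, gaussianPDFReal_zero_one_apply]

theorem hasDerivAt_stdNormalCdf (t : ℝ) : HasDerivAt stdNormalCdf (φ t) t := by
  rw [show stdNormalCdf = _ from funext stdNormalCdf_eq_integral_gaussianPDFReal]
  exact hasDerivAt_integral_Iic (continuous_gaussianPDFReal 0 1) (integrable_gaussianPDFReal 0 1) t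

theorem continuous_stdNormalCdf : Continuous stdNormalCdf :=
  continuous_iff_continuousAt.2 fun t ↦ (hasDerivAt_stdNormalCdf t).continuousAt

theorem abs_stdNormalCdf_le_one (t : ℝ) : |stdNormalCdf t| ≤ 1 := by
  have := norm_integral_Iic_le (integrable_gaussianPDFReal 0 1) t
  simpa [← stdNormalCdf_eq_integral_gaussianPDFReal, abs_of_nonneg (gaussianPDFReal_nonneg _ _ _),
    integral_gaussianPDFReal_eq_one] using this

theorem integral_gaussianPDFReal_mul_stdNormalCdf : ∫ t, φ t * stdNormalCdf t = 1 / 2 := by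
  simp_rw [stdNormalCdf_eq_integral_gaussianPDFReal]
  rw [integral_mul_integral_Iic (continuous_gaussianPDFReal 0 1) (integrable_gaussianPDFReal 0 1),
    integral_gaussianPDFReal_eq_one 0 one_ne_zero]
  norm_num

theorem integrable_mul_stdNormalCdf {f : ℝ → ℝ} (hf : Integrable f) :
    Integrable fun t ↦ f t * stdNormalCdf t :=
  hf.mul_bdd continuous_stdNormalCdf.aestronglyMeasurable
    (Eventually.of_forall abs_stdNormalCdf_le_one)

theorem integral_mul_gaussianPDFReal_mul_stdNormalCdf :
    ∫ t, t * φ t * stdNormalCdf t = 1 / (2 * √π) := by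
  have hparts := integral_mul_deriv_eq_deriv_mul_of_integrable (u := stdNormalCdf) (v := φ)
    (u' := φ) (v' := fun t ↦ -t * φ t)
    (fun t _ ↦ hasDerivAt_stdNormalCdf t)
    (fun t _ ↦ by simpa using hasDerivAt_gaussianPDFReal 0 1 t)
    ((integrable_mul_stdNormalCdf integrable_mul_gaussianPDFReal_zero_one.neg).congr
      (Eventually.of_forall fun t ↦ by simp only [Pi.mul_apply, Pi.neg_apply]; ring))
    (integrable_gaussianPDFReal_zero_one_sq.congr (Eventually.of_forall fun t ↦ sq (φ t)))
    ((integrable_mul_stdNormalCdf (integrable_gaussianPDFReal 0 1)).congr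
      (Eventually.of_forall fun t ↦ mul_comm _ _))
  simp only [← sq, integral_gaussianPDFReal_zero_one_sq] at hparts
  have hneg : ∫ t, t * φ t * stdNormalCdf t = -∫ t, stdNormalCdf t * (-t * φ t) := by
    rw [← integral_neg]
    congr 1 with t
    ring
  rw [hneg, hparts, neg_neg]

-- The reweighting factor of linear ranking, in the standardized fitness `t = (f - μ) / σ`.
noncomputable def linearRankingWeight (η t : ℝ) : ℝ := η + 2 * (1 - η) * stdNormalCdf t

theorem mul_linearRankingWeight (η : ℝ) (f : ℝ → ℝ) (t : ℝ) :
    f t * linearRankingWeight η t = η * f t + 2 * (1 - η) * (f t * stdNormalCdf t) := by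
  unfold linearRankingWeight
  ring

theorem integrable_mul_linearRankingWeight (η : ℝ) {f : ℝ → ℝ} (hf : Integrable f) :
    Integrable fun t ↦ f t * linearRankingWeight η t := by
  simp_rw [mul_linearRankingWeight]
  exact (hf.const_mul _).add ((integrable_mul_stdNormalCdf hf).const_mul _)

theorem integral_mul_linearRankingWeight (η : ℝ) {f : ℝ → ℝ} (hf : Integrable f) :
    ∫ t, f t * linearRankingWeight η t
      = η * (∫ t, f t) + 2 * (1 - η) * ∫ t, f t * stdNormalCdf t := by
  simp_rw [mul_linearRankingWeight]
  rw [integral_add (hf.const_mul _) ((integrable_mul_stdNormalCdf hf).const_mul _),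
    integral_const_mul, integral_const_mul]

theorem integral_gaussianPDFReal_mul_linearRankingWeight (η : ℝ) :
    ∫ t, φ t * linearRankingWeight η t = 1 := by
  rw [integral_mul_linearRankingWeight η (integrable_gaussianPDFReal 0 1),
    integral_gaussianPDFReal_eq_one 0 one_ne_zero, integral_gaussianPDFReal_mul_stdNormalCdf]
  ring

theorem integral_mul_gaussianPDFReal_mul_linearRankingWeight (η : ℝ) :
    ∫ t, t * φ t * linearRankingWeight η t = (1 - η) / √π := by
  rw [integral_mul_linearRankingWeight η integrable_mul_gaussianPDFReal_zero_one,
    integral_mul_gaussianPDFReal 0 one_ne_zero, integral_mul_gaussianPDFReal_mul_stdNormalCdf]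
  field_simp
  ring

theorem integral_affine_mul_gaussianPDFReal_mul_linearRankingWeight (μ σ η : ℝ) :
    ∫ t, (μ + σ * t) * φ t * linearRankingWeight η t = μ + σ * ((1 - η) / √π) := by
  have hsplit (t : ℝ) : (μ + σ * t) * φ t * linearRankingWeight η t
      = μ * (φ t * linearRankingWeight η t) + σ * (t * φ t * linearRankingWeight η t) := by
    ring
  simp_rw [hsplit]
  rw [integral_add
      ((integrable_mul_linearRankingWeight η (integrable_gaussianPDFReal 0 1)).const_mul _)
      ((integrable_mul_linearRankingWeight η integrable_mul_gaussianPDFReal_zero_one).const_mul _),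
    integral_const_mul, integral_const_mul, integral_gaussianPDFReal_mul_linearRankingWeight,
    integral_mul_gaussianPDFReal_mul_linearRankingWeight, mul_one]

theorem integral_comp_sub_div {E : Type*} [NormedAddCommGroup E] [NormedSpace ℝ E] (f : ℝ → E)
    (μ σ : ℝ) : ∫ x, f ((x - μ) / σ) = |σ| • ∫ t, f t := by
  rw [integral_sub_right_eq_self (fun y ↦ f (y / σ)) μ, Measure.integral_comp_div]

theorem gaussian_density_eq_inv_mul_gaussianPDFReal (μ σ x : ℝ) :
    1 / (σ * √(2 * π)) * exp (-(x - μ) ^ 2 / (2 * σ ^ 2)) = σ⁻¹ * φ ((x - μ) / σ) := by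
  rw [gaussianPDFReal_zero_one_apply, div_pow]
  field_simp

theorem effective_average_fitness_linear_ranking (μ σ η : ℝ) (hσ : 0 < σ) :
    (∫ x : ℝ, x * ((1 / (σ * Real.sqrt (2 * Real.pi))) *
          Real.exp (-(x - μ) ^ 2 / (2 * σ ^ 2))) *
        (η + 2 * (1 - η) * stdNormalCdf ((x - μ) / σ)))
      = μ + σ * ((1 - η) / Real.sqrt Real.pi) := by
  have hintegrand (x : ℝ) : x * ((1 / (σ * √(2 * π))) * exp (-(x - μ) ^ 2 / (2 * σ ^ 2))) *
      (η + 2 * (1 - η) * stdNormalCdf ((x - μ) / σ)) = σ⁻¹ * ((μ + σ * ((x - μ) / σ)) *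
        φ ((x - μ) / σ) * linearRankingWeight η ((x - μ) / σ)) := by
    rw [gaussian_density_eq_inv_mul_gaussianPDFReal, mul_div_cancel₀ _ hσ.ne', add_sub_cancel,
      linearRankingWeight]
    ring
  simp_rw [hintegrand]
  rw [integral_const_mul,
    integral_comp_sub_div (fun t ↦ (μ + σ * t) * φ t * linearRankingWeight η t),
    abs_of_pos hσ, smul_eq_mul, inv_mul_cancel_left₀ hσ.ne',
    integral_affine_mul_gaussianPDFReal_mul_linearRankingWeight]
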